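/- Suppose p x y > 0 for all x ∈ 𝒳₁ and y ∈ 𝒳₂ (full support), and let q : 𝒳₁ → ℝ be the marginal weights q a = ∑_{y ∈ 𝒳₂} p a y (so q a > 0 for all a). Let κ : 𝒳₁ → Finset 𝒳₁ send each vertex a to its non-adjacency class κ a = {b | b = a or a and b are non-adjacent in G_{X₁}} (by the full-support structure theorem these classes are exactly the maximal independent sets of G_{X₁}, and κ is a proper coloring of G_{X₁}). Then κ is a minimum entropy coloring: for every finite type C and every proper coloring c : 𝒳₁ → C of G_{X₁}, H(c) ≥ H(κ). -/

import Mathlib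

/-- The characteristic graph `G_{X₁}` of `X₁` with respect to `X₂`, the joint weights `p`,
and the function `f`. -/
def charGraph {X1 X2 Z : Type*} (f : X1 → X2 → Z) (p : X1 → X2 → ℝ) : SimpleGraph X1 where
  Adj a b := a ≠ b ∧ ∃ y, 0 < p a y ∧ 0 < p b y ∧ f a y ≠ f b y
  symm := by
    constructor
    rintro a b ⟨hab, y, h1, h2, h3⟩
    exact ⟨hab.symm, y, h2, h1, h3.symm⟩
  loopless := by
    constructor
    rintro a ⟨h, -⟩
    exact h rfl

/-- The entropy of a map `c : V → C` when the vertices of `V` carry weights `q`: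
`H(c) = ∑_σ negMulLog (∑_{v : c v = σ} q v)`. -/
noncomputable def colorEntropy {V C : Type*} [Fintype V] [Fintype C] [DecidableEq C]
    (q : V → ℝ) (c : V → C) : ℝ :=
  ∑ σ : C, Real.negMulLog (∑ v : V, if c v = σ then q v else 0)

open Classical in
/-- `κ` sends each vertex `a` to its non-adjacency class
`κ a = {b | b = a ∨ ¬ a ~ b}` in the characteristic graph. -/
noncomputable def kappa {X1 X2 Z : Type*} [Fintype X1]
    (f : X1 → X2 → Z) (p : X1 → X2 → ℝ) (a : X1) : Finset X1 :=
  Finset.univ.filter fun b => b = a ∨ ¬ (charGraph f p).Adj a b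

/-!
With full support, `a` and `b` are adjacent exactly when the functions `f a` and `f b` differ, so
`κ a` is the class of `a` under `f a = f b`. A proper coloring can only use one color on two
vertices with `f a = f b`, hence it refines this partition and `κ` is obtained from it by merging
color classes. Merging classes cannot increase the entropy, because `negMulLog` is subadditive
on `[0, ∞)`.
-/

open Finset Real

lemma Real.mul_log_le_mul_log_of_le {s u : ℝ} (hs : 0 ≤ s) (hsu : s ≤ u) :
    s * log s ≤ s * log u := by
  rcases hs.eq_or_lt with rfl | hs
  · simp
  · exact mul_le_mul_of_nonneg_left (log_le_log hs hsu) hs.le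

lemma Real.negMulLog_add_le {s t : ℝ} (hs : 0 ≤ s) (ht : 0 ≤ t) :
    negMulLog (s + t) ≤ negMulLog s + negMulLog t := by
  have h₁ := mul_log_le_mul_log_of_le hs (le_add_of_nonneg_right ht)
  have h₂ := mul_log_le_mul_log_of_le ht (le_add_of_nonneg_left hs)
  simp only [negMulLog]
  linarith

lemma Real.negMulLog_sum_le {ι : Type*} (s : Finset ι) (w : ι → ℝ) (hw : ∀ i ∈ s, 0 ≤ w i) :
    negMulLog (∑ i ∈ s, w i) ≤ ∑ i ∈ s, negMulLog (w i) :=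
  le_sum_of_subadditive_on_pred negMulLog (0 ≤ ·) negMulLog_zero.le
    (fun _ _ => negMulLog_add_le) (fun _ _ => add_nonneg) w hw

section colorEntropy

variable {V C D : Type*} [Fintype V] [Fintype C] [DecidableEq C] [DecidableEq D]

lemma sum_ite_comp_eq_sum_filter (q : V → ℝ) (c : V → C) (g : C → D) (τ : D) :
    (∑ v, if g (c v) = τ then q v else 0) =
      ∑ σ with g σ = τ, ∑ v, if c v = σ then q v else 0 := by
  rw [sum_comm]
  refine sum_congr rfl fun v _ => ?_
  rw [sum_ite_eq]
  simp

lemma colorEntropy_comp_le [Fintype D] {q : V → ℝ} (hq : ∀ v, 0 ≤ q v) (c : V → C) (g : C → D) :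
    colorEntropy q (g ∘ c) ≤ colorEntropy q c := by
  have hclass : ∀ σ, 0 ≤ ∑ v, if c v = σ then q v else 0 := fun σ =>
    sum_nonneg fun v _ => by split_ifs <;> simp [hq v]
  calc colorEntropy q (g ∘ c)
      = ∑ τ : D, negMulLog (∑ σ with g σ = τ, ∑ v, if c v = σ then q v else 0) := by
        simp only [colorEntropy, Function.comp_apply, sum_ite_comp_eq_sum_filter]
    _ ≤ ∑ τ : D, ∑ σ with g σ = τ, negMulLog (∑ v, if c v = σ then q v else 0) :=
        sum_le_sum fun τ _ => negMulLog_sum_le _ _ fun σ _ => hclass σ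
    _ = colorEntropy q c := sum_fiberwise _ _ _

end colorEntropy

section fullSupport

variable {X1 X2 Z : Type*} {f : X1 → X2 → Z} {p : X1 → X2 → ℝ}

lemma charGraph_adj_iff_of_pos (hp : ∀ x y, 0 < p x y) {a b : X1} :
    (charGraph f p).Adj a b ↔ f a ≠ f b := by
  refine ⟨fun ⟨_, y, _, _, hy⟩ hab => hy (congrFun hab y), fun hab => ?_⟩
  obtain ⟨y, hy⟩ := Function.ne_iff.mp hab
  exact ⟨fun h => hab (h ▸ rfl), y, hp a y, hp b y, hy⟩

variable [Fintype X1]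

lemma mem_kappa_iff_of_pos (hp : ∀ x y, 0 < p x y) {a b : X1} :
    b ∈ kappa f p a ↔ f a = f b := by
  simp only [kappa, mem_filter, mem_univ, true_and, charGraph_adj_iff_of_pos hp, not_not]
  exact ⟨by rintro (rfl | h) <;> trivial, Or.inr⟩

lemma kappa_eq_iff_of_pos (hp : ∀ x y, 0 < p x y) {a b : X1} :
    kappa f p a = kappa f p b ↔ f a = f b := by
  refine ⟨fun h => (mem_kappa_iff_of_pos hp).mp (h ▸ (mem_kappa_iff_of_pos hp).mpr rfl), ?_⟩
  intro hab
  ext v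
  simp only [mem_kappa_iff_of_pos hp, hab]

end fullSupport

theorem stmt3_general {X1 X2 Z : Type*} [Fintype X1] [DecidableEq X1]
    [Fintype X2]
    (f : X1 → X2 → Z) (p : X1 → X2 → ℝ) (hp : ∀ x y, 0 < p x y)
    (q : X1 → ℝ) (hq : ∀ a, q a = ∑ y : X2, p a y) :
    (∀ a b, (charGraph f p).Adj a b → kappa f p a ≠ kappa f p b) ∧
    ∀ (C : Type) [Fintype C] [DecidableEq C] (c : X1 → C),
      (∀ a b, (charGraph f p).Adj a b → c a ≠ c b) →
      colorEntropy q c ≥ colorEntropy q (kappa f p) := by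
  refine ⟨fun a b hab =>
    (kappa_eq_iff_of_pos hp).not.mpr ((charGraph_adj_iff_of_pos hp).mp hab), ?_⟩
  intro C _ _ c hc
  have hq_nonneg (a : X1) : 0 ≤ q a := hq a ▸ sum_nonneg fun y _ => (hp a y).le
  have hfactor : (kappa f p).FactorsThrough c := fun a b hcab =>
    (kappa_eq_iff_of_pos hp).mpr <| not_not.mp fun hne =>
      hc a b ((charGraph_adj_iff_of_pos hp).mpr hne) hcab
  rw [← hfactor.extend_comp (fun _ => ∅)]
  exact colorEntropy_comp_le hq_nonneg c _

/-- Under the full-support hypothesis, the non-adjacency-class map `κ` is a proper coloring of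
the characteristic graph `G_{X₁}` and it has minimum entropy among all proper colorings, with
respect to the marginal weights `q a = ∑ y, p a y`. -/
theorem stmt3 {X1 X2 Z : Type*} [Fintype X1] [Nonempty X1] [DecidableEq X1]
    [Fintype X2] [Nonempty X2]
    (f : X1 → X2 → Z) (p : X1 → X2 → ℝ) (hp : ∀ x y, 0 < p x y)
    (q : X1 → ℝ) (hq : ∀ a, q a = ∑ y : X2, p a y) :
    (∀ a b, (charGraph f p).Adj a b → kappa f p a ≠ kappa f p b) ∧
    ∀ (C : Type) [Fintype C] [DecidableEq C] (c : X1 → C),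
      (∀ a b, (charGraph f p).Adj a b → c a ≠ c b) →
      colorEntropy q c ≥ colorEntropy q (kappa f p) :=
  stmt3_general f p hp q hq
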